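/- Let A = ℤ[v, v⁻¹] be the ring of Laurent polynomials in one variable v over ℤ, let c be a natural number, and let P : ℕ → A[z] be a sequence of polynomials in z with coefficients in A such that: (1) deg_z(P 0) < (c : ℕ ∪ {−∞}) and deg_z(P 1) < c + 1, and (2) for every n ≥ 2, the skein relation v⁻¹·(P n) − v·(P (n−2)) = z·(P (n−1)) holds. Then deg_z(P n) < c + n for every natural number n, where deg_z denotes the degree in z valued in ℕ ∪ {−∞} (the zero polynomial having degree −∞). -/
import Mathlib


open Polynomial LaurentPolynomial

/-- The full degree-bounding argument of Section 3, abstracted to families of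
polynomials in `(ℤ[v,v⁻¹])[z]` satisfying the skein relation among consecutive
terms: then `deg_z (P n) < c + n` for all `n`. -/
theorem skein_family_degree_bound
    (c : ℕ) (P : ℕ → Polynomial (LaurentPolynomial ℤ))
    (h0 : (P 0).degree < (c : WithBot ℕ))
    (h1 : (P 1).degree < (c : WithBot ℕ) + 1)
    (hrec : ∀ n : ℕ, 2 ≤ n →
        Polynomial.C (LaurentPolynomial.T (-1)) * P n
          - Polynomial.C (LaurentPolynomial.T 1) * P (n - 2)
          = Polynomial.X * P (n - 1)) :
    ∀ n : ℕ, (P n).degree < (c : WithBot ℕ) + n := by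
  have hT1 : (T 1 : LaurentPolynomial ℤ) ≠ 0 := (isUnit_T 1).ne_zero
  have hT : (Polynomial.C (T 1) : Polynomial (LaurentPolynomial ℤ)) *
      Polynomial.C (T (-1)) = 1 := by
    rw [← Polynomial.C_mul, ← T_add]
    norm_num
  intro n
  induction n using Nat.strong_induction_on with
  | _ n ih =>
    match n, ih with
    | 0, _ => simpa using h0
    | 1, _ => simpa using h1
    | (m+2), ih =>
      have h2 := hrec (m+2) (by omega)
      simp only [Nat.add_sub_cancel, show m+2-1 = m+1 from rfl] at h2
      have key : P (m+2) = Polynomial.C (T 1) * Polynomial.X * P (m+1)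
          + Polynomial.C (T 1) * Polynomial.C (T 1) * P m := by
        linear_combination Polynomial.C (T 1) * h2 - P (m+2) * hT
      have d1 : (Polynomial.C (T 1) * Polynomial.X * P (m+1)).degree
          < (c : WithBot ℕ) + (m+2 : ℕ) := by
        rw [degree_mul, degree_C_mul_X hT1]
        have := ih (m+1) (by omega)
        calc (1 : WithBot ℕ) + (P (m+1)).degree = (P (m+1)).degree + 1 := by
              rw [add_comm]
          _ < ((c : WithBot ℕ) + (m+1 : ℕ)) + 1 := by
              exact WithBot.add_lt_add_right (by simp [← Nat.cast_add]) this
          _ = (c : WithBot ℕ) + (m+2 : ℕ) := by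
              push_cast; ring
      have d2 : (Polynomial.C (T 1) * Polynomial.C (T 1) * P m).degree
          < (c : WithBot ℕ) + (m+2 : ℕ) := by
        rw [degree_mul, degree_mul, Polynomial.degree_C hT1]
        have := ih m (by omega)
        calc (0 : WithBot ℕ) + 0 + (P m).degree = (P m).degree := by simp
          _ < (c : WithBot ℕ) + (m : ℕ) := this
          _ ≤ (c : WithBot ℕ) + (m+2 : ℕ) := by
              rw [← Nat.cast_add, ← Nat.cast_add]
              exact_mod_cast Nat.le_add_right _ 2
      calc (P (m+2)).degree ≤ max _ _ := key ▸ degree_add_le _ _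
        _ < (c : WithBot ℕ) + (m+2 : ℕ) := max_lt d1 d2
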